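/- arXiv:1110.1560 — 5 statements merged into one kernel-verified Lean document; each statement's English description precedes it below -/
import Mathlib

section
/- Let R > √2 be a real number and h ≥ 1 an integer. For any two grid nodes U, V ∈ ℤ² with Euclidean distance d(U,V) ≤ (R−√2)·h, there exists a sequence of at most h+1 grid points U = W₀, W₁, …, W_k = V with k ≤ h such that consecutive points satisfy d(W_i, W_{i+1}) ≤ R. -/
/-!
Walk the distance `R - √2/2` along the segment from `U` towards `V` and round the point
reached to the nearest grid node, which is at most `√2/2` away. This is one hop of length at
most `R` that brings us at least `R - √2` closer to `V`, so induction on `h` concludes.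
-/

/-- Euclidean distance between two grid points. -/
noncomputable def gridDist (U V : ℤ × ℤ) : ℝ :=
  Real.sqrt (((U.1 - V.1 : ℤ) : ℝ)^2 + ((U.2 - V.2 : ℤ) : ℝ)^2)

noncomputable def gridPoint (U : ℤ × ℤ) : EuclideanSpace ℝ (Fin 2) := !₂[U.1, U.2]

lemma gridDist_eq_dist (U V : ℤ × ℤ) : gridDist U V = dist (gridPoint U) (gridPoint V) := by
  simp [gridDist, gridPoint, EuclideanSpace.dist_eq, Fin.sum_univ_two, Real.dist_eq, sq_abs]

lemma gridPoint_injective : Function.Injective gridPoint := by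
  intro U V hUV
  have h0 := congrArg (· 0) hUV
  have h1 := congrArg (· 1) hUV
  simp [gridPoint] at h0 h1
  exact Prod.ext h0 h1

lemma exists_dist_gridPoint_le (p : EuclideanSpace ℝ (Fin 2)) :
    ∃ W, dist (gridPoint W) p ≤ Real.sqrt 2 / 2 := by
  refine ⟨(round (p 0), round (p 1)), ?_⟩
  have hround (x : ℝ) : dist (round x : ℝ) x ^ 2 ≤ 1 / 4 := by
    have := abs_sub_round x
    rw [Real.dist_eq, abs_sub_comm, sq_abs]
    nlinarith [abs_nonneg (x - round x), sq_abs (x - round x)]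
  have h2 : Real.sqrt 2 / 2 = Real.sqrt (1 / 4 + 1 / 4) := by
    rw [show (1 / 4 + 1 / 4 : ℝ) = 2 / 2 ^ 2 by norm_num, Real.sqrt_div' _ (by norm_num),
      Real.sqrt_sq (by norm_num)]
  rw [h2, EuclideanSpace.dist_eq, Fin.sum_univ_two]
  gcongr
  · simpa [gridPoint] using hround (p 0)
  · simpa [gridPoint] using hround (p 1)

lemma exists_grid_waypoint (U V : ℤ × ℤ) {r : ℝ} (hr : 0 ≤ r) (hrd : r ≤ gridDist U V) :
    ∃ W, gridDist U W ≤ r + Real.sqrt 2 / 2 ∧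
      gridDist W V ≤ gridDist U V - r + Real.sqrt 2 / 2 := by
  set d := gridDist U V
  have hd : 0 ≤ d := hr.trans hrd
  have hrd_mul : r / d * d = r := div_mul_cancel_of_imp fun h => by linarith
  set p := AffineMap.lineMap (gridPoint U) (gridPoint V) (r / d)
  have hpU : dist p (gridPoint U) = r := by
    rw [dist_lineMap_left, ← gridDist_eq_dist, Real.norm_eq_abs,
      abs_of_nonneg (by positivity), hrd_mul]
  have hpV : dist p (gridPoint V) = d - r := by
    rw [dist_lineMap_right, ← gridDist_eq_dist, Real.norm_eq_abs,
      abs_of_nonneg (sub_nonneg.2 (div_le_one_of_le₀ hrd hd)), sub_mul, one_mul, hrd_mul]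
  obtain ⟨W, hW⟩ := exists_dist_gridPoint_le p
  refine ⟨W, ?_, ?_⟩
  · rw [gridDist_eq_dist]
    linarith [dist_triangle_right (gridPoint U) (gridPoint W) p, dist_comm p (gridPoint U)]
  · rw [gridDist_eq_dist]
    linarith [dist_triangle (gridPoint W) p (gridPoint V)]

def WithinHops (R : ℝ) (h : ℕ) (U V : ℤ × ℤ) : Prop :=
  ∃ k ≤ h, ∃ W : ℕ → ℤ × ℤ, W 0 = U ∧ W k = V ∧ ∀ i < k, gridDist (W i) (W (i + 1)) ≤ R

namespace WithinHops

variable {R : ℝ} {h : ℕ} {U V W : ℤ × ℤ}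

lemma refl : WithinHops R h U U :=
  ⟨0, h.zero_le, fun _ => U, rfl, rfl, by simp⟩

lemma cons (hUW : gridDist U W ≤ R) (hWV : WithinHops R h W V) : WithinHops R (h + 1) U V := by
  obtain ⟨k, hk, P, hP0, hPk, hP⟩ := hWV
  refine ⟨k + 1, by omega, fun | 0 => U | i + 1 => P i, rfl, hPk, ?_⟩
  rintro (_ | i) hi
  · simpa [hP0] using hUW
  · exact hP i (by omega)

end WithinHops

lemma eq_of_gridDist_le_zero {U V : ℤ × ℤ} (h : gridDist U V ≤ 0) : U = V :=
  gridPoint_injective <| dist_le_zero.1 <| gridDist_eq_dist U V ▸ h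

lemma withinHops_of_gridDist_le {R : ℝ} (hR : Real.sqrt 2 ≤ R) (h : ℕ) (U V : ℤ × ℤ)
    (hd : gridDist U V ≤ (R - Real.sqrt 2) * h) : WithinHops R h U V := by
  induction h generalizing U with
  | zero =>
    obtain rfl := eq_of_gridDist_le_zero (by simpa using hd)
    exact .refl
  | succ h ih =>
    by_cases hUV : gridDist U V ≤ R
    · exact .cons hUV .refl
    have hsqrt := Real.sqrt_nonneg 2
    obtain ⟨W, hUW, hWV⟩ := exists_grid_waypoint U V (r := R - Real.sqrt 2 / 2)
      (by linarith) (by linarith [not_le.1 hUV])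
    refine .cons (by linarith) (ih W ?_)
    push_cast at hd
    linarith

theorem at_most_h_hops_general (R : ℝ) (hR : R > Real.sqrt 2) (h : ℕ)
    (U V : ℤ × ℤ) (hd : gridDist U V ≤ (R - Real.sqrt 2) * h) :
    ∃ k ≤ h, ∃ W : ℕ → ℤ × ℤ, W 0 = U ∧ W k = V ∧
      ∀ i < k, gridDist (W i) (W (i+1)) ≤ R :=
  withinHops_of_gridDist_le hR.le h U V hd

theorem at_most_h_hops (R : ℝ) (hR : R > Real.sqrt 2) (h : ℕ) (hh : 1 ≤ h)
    (U V : ℤ × ℤ) (hd : gridDist U V ≤ (R - Real.sqrt 2) * h) :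
    ∃ k ≤ h, ∃ W : ℕ → ℤ × ℤ, W 0 = U ∧ W k = V ∧
      ∀ i < k, gridDist (W i) (W (i+1)) ≤ R :=
  at_most_h_hops_general R hR h U V hd
end

section
/- Let R > √2, h ≥ 1 an integer, and let u₁, u₂ ∈ ℤ² be Gauss-reduced vectors (|u₁| ≤ |u₂| and 2|u₁·u₂| ≤ |u₁|²) with |u₁| > (R − √2)·h. Then for any integers α, β with |α| ≥ μ(R) or |β| ≥ μ(R), where μ(R) = 2√3·R/(3(R−√2)), the point W = α·u₁ + β·u₂ satisfies |W| > R·h. -/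
/-!
For a Gauss-reduced pair with `a = |u₁|`, the quadratic form
`|α u₁ + β u₂|² = α²|u₁|² + 2αβ (u₁·u₂) + β²|u₂|²` is at least `a² (α² - |α||β| + β²)`, and
`α² - |α||β| + β² = (|α| - |β|/2)² + (3/4) β²` (and symmetrically) is at least
`(3/4) max(α², β²)`. Hence `|W| ≥ (√3/2) μ |u₁| > (√3/2) μ (R - √2) h = R h`: the constant
`μ(R)` is chosen so that `(√3/2) μ(R) (R - √2) = R`.
-/

/-- Euclidean norm of an integer vector. -/
noncomputable def inorm (u : ℤ × ℤ) : ℝ :=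
  Real.sqrt ((u.1 : ℝ)^2 + (u.2 : ℝ)^2)

/-- Standard dot product. -/
def idot (u v : ℤ × ℤ) : ℤ := u.1 * v.1 + u.2 * v.2

open Real

lemma inorm_sq (u : ℤ × ℤ) : inorm u ^ 2 = (u.1 : ℝ) ^ 2 + (u.2 : ℝ) ^ 2 :=
  sq_sqrt (by positivity)

lemma inorm_nonneg (u : ℤ × ℤ) : 0 ≤ inorm u :=
  sqrt_nonneg _

lemma inorm_smul_add_smul_sq (α β : ℤ) (u v : ℤ × ℤ) :
    inorm (α • u + β • v) ^ 2 =
      α ^ 2 * inorm u ^ 2 + 2 * α * β * idot u v + β ^ 2 * inorm v ^ 2 := by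
  simp only [inorm_sq, idot, Prod.fst_add, Prod.snd_add, Prod.smul_fst, Prod.smul_snd,
    smul_eq_mul]
  push_cast
  ring

lemma three_quarters_mul_sq_le_of_reduced {a b d x y m : ℝ} (hab : a ^ 2 ≤ b ^ 2)
    (hd : 2 * |d| ≤ a ^ 2) (hm₀ : 0 ≤ m) (hm : m ≤ |x| ∨ m ≤ |y|) :
    3 / 4 * m ^ 2 * a ^ 2 ≤ x ^ 2 * a ^ 2 + 2 * x * y * d + y ^ 2 * b ^ 2 := by
  have hcross : -(|x| * |y| * a ^ 2) ≤ 2 * x * y * d := by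
    have : |x * y * d| ≤ |x| * |y| * (a ^ 2 / 2) := by
      rw [abs_mul, abs_mul]
      gcongr
      linarith
    linarith [neg_abs_le (x * y * d)]
  have hform : 3 / 4 * m ^ 2 ≤ x ^ 2 - |x| * |y| + y ^ 2 := by
    rcases hm with hm | hm
    · nlinarith [sq_nonneg (|y| - |x| / 2), sq_abs x, sq_abs y]
    · nlinarith [sq_nonneg (|x| - |y| / 2), sq_abs x, sq_abs y]
  nlinarith [mul_le_mul_of_nonneg_right hform (sq_nonneg a),
    mul_le_mul_of_nonneg_left hab (sq_nonneg y)]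

lemma sqrt_three_div_two_mul_inorm_le {u₁ u₂ : ℤ × ℤ} (hred₁ : inorm u₁ ≤ inorm u₂)
    (hred₂ : 2 * |(idot u₁ u₂ : ℝ)| ≤ inorm u₁ ^ 2) {α β : ℤ} {m : ℝ} (hm₀ : 0 ≤ m)
    (hm : m ≤ |(α : ℝ)| ∨ m ≤ |(β : ℝ)|) :
    √3 / 2 * m * inorm u₁ ≤ inorm (α • u₁ + β • u₂) := by
  have hsq : (√3 / 2 * m * inorm u₁) ^ 2 ≤ inorm (α • u₁ + β • u₂) ^ 2 := by
    rw [inorm_smul_add_smul_sq, mul_pow, mul_pow, div_pow, sq_sqrt zero_le_three]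
    have := three_quarters_mul_sq_le_of_reduced
      (pow_le_pow_left₀ (inorm_nonneg u₁) hred₁ 2) hred₂ hm₀ hm
    linarith
  exact (pow_le_pow_iff_left₀ (by have := inorm_nonneg u₁; positivity) (inorm_nonneg _) two_ne_zero).mp hsq

theorem far_lattice_points_general (R : ℝ) (hR : R > Real.sqrt 2) (h : ℕ)
    (u₁ u₂ : ℤ × ℤ)
    (hred₁ : inorm u₁ ≤ inorm u₂)
    (hred₂ : 2 * |(idot u₁ u₂ : ℝ)| ≤ (inorm u₁)^2)
    (hu₁ : inorm u₁ > (R - Real.sqrt 2) * h)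
    (α β : ℤ)
    (hαβ : |(α : ℝ)| ≥ 2 * Real.sqrt 3 * R / (3 * (R - Real.sqrt 2)) ∨
           |(β : ℝ)| ≥ 2 * Real.sqrt 3 * R / (3 * (R - Real.sqrt 2))) :
    inorm (α • u₁ + β • u₂) > R * h := by
  have hc : 0 < R - √2 := sub_pos.mpr hR
  have hR₀ : 0 < R := (sqrt_nonneg 2).trans_lt hR
  set μ := 2 * √3 * R / (3 * (R - √2))
  have hμ : 0 < μ := by positivity
  have hμR : √3 / 2 * μ * (R - √2) = R := by
    simp only [μ]
    field_simp
    rw [sq_sqrt zero_le_three]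
  calc R * h = √3 / 2 * μ * ((R - √2) * h) := by linear_combination -(h : ℝ) * hμR
    _ < √3 / 2 * μ * inorm u₁ := by gcongr
    _ ≤ inorm (α • u₁ + β • u₂) := sqrt_three_div_two_mul_inorm_le hred₁ hred₂ hμ.le hαβ

theorem far_lattice_points (R : ℝ) (hR : R > Real.sqrt 2) (h : ℕ) (hh : 1 ≤ h)
    (u₁ u₂ : ℤ × ℤ)
    (hred₁ : inorm u₁ ≤ inorm u₂)
    (hred₂ : 2 * |(idot u₁ u₂ : ℝ)| ≤ (inorm u₁)^2)
    (hu₁ : inorm u₁ > (R - Real.sqrt 2) * h)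
    (α β : ℤ)
    (hαβ : |(α : ℝ)| ≥ 2 * Real.sqrt 3 * R / (3 * (R - Real.sqrt 2)) ∨
           |(β : ℝ)| ≥ 2 * Real.sqrt 3 * R / (3 * (R - Real.sqrt 2))) :
    inorm (α • u₁ + β • u₂) > R * h :=
  far_lattice_points_general R hR h u₁ u₂ hred₁ hred₂ hu₁ α β hαβ
end

section
/- Let u₁ = (x₁,y₁), u₂ = (x₂,y₂) ∈ ℤ² with d = x₁y₂ − x₂y₁ ≠ 0. Define c₁(w) = (x·y₂ − y·x₂) mod |d| and c₂(w) = (−x·y₁ + y·x₁) mod |d| for w = (x,y) ∈ ℤ². Then for any w₁, w₂ ∈ ℤ², c₁(w₁) = c₁(w₂) and c₂(w₁) = c₂(w₂) if and only if w₁ − w₂ = α·u₁ + β·u₂ for some integers α, β. -/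
/-!
Cramer's rule for the integer matrix with columns `u₁, u₂` reads
`d • w = det₂ w u₂ • u₁ + det₂ u₁ w • u₂`, where `det₂ w u₂` and `det₂ u₁ w` are exactly the
two linear forms defining the colours. Hence `w` lies in the lattice `ℤ u₁ + ℤ u₂` iff `d`
divides both forms, and equality of colours of `w₁, w₂` is that divisibility for `w₁ - w₂`.
-/

def det₂ {R : Type*} [CommRing R] (v w : R × R) : R := v.1 * w.2 - v.2 * w.1

section Det₂

variable {R : Type*} [CommRing R]

theorem det₂_sub_left (v w u : R × R) : det₂ (v - w) u = det₂ v u - det₂ w u := by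
  simp only [det₂, Prod.fst_sub, Prod.snd_sub]; ring

theorem det₂_sub_right (u v w : R × R) : det₂ u (v - w) = det₂ u v - det₂ u w := by
  simp only [det₂, Prod.fst_sub, Prod.snd_sub]; ring

theorem det₂_smul_eq_add (u₁ u₂ v : R × R) :
    det₂ u₁ u₂ • v = det₂ v u₂ • u₁ + det₂ u₁ v • u₂ := by
  ext <;> simp only [det₂, Prod.smul_fst, Prod.smul_snd, Prod.fst_add, Prod.snd_add,
    smul_eq_mul] <;> ring

theorem det₂_linear_combination_left (u₁ u₂ : R × R) (α β : R) :
    det₂ (α • u₁ + β • u₂) u₂ = α * det₂ u₁ u₂ := by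
  simp only [det₂, Prod.fst_add, Prod.snd_add, Prod.smul_fst, Prod.smul_snd, smul_eq_mul]; ring

theorem det₂_linear_combination_right (u₁ u₂ : R × R) (α β : R) :
    det₂ u₁ (α • u₁ + β • u₂) = β * det₂ u₁ u₂ := by
  simp only [det₂, Prod.fst_add, Prod.snd_add, Prod.smul_fst, Prod.smul_snd, smul_eq_mul]; ring

theorem exists_eq_smul_add_smul_iff_dvd_det₂ [IsDomain R] {u₁ u₂ : R × R}
    (hd : det₂ u₁ u₂ ≠ 0) (v : R × R) :
    (∃ α β : R, v = α • u₁ + β • u₂) ↔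
      det₂ u₁ u₂ ∣ det₂ v u₂ ∧ det₂ u₁ u₂ ∣ det₂ u₁ v := by
  constructor
  · rintro ⟨α, β, rfl⟩
    rw [det₂_linear_combination_left, det₂_linear_combination_right]
    exact ⟨dvd_mul_left _ _, dvd_mul_left _ _⟩
  · rintro ⟨⟨α, hα⟩, ⟨β, hβ⟩⟩
    refine ⟨α, β, smul_right_injective (R × R) hd ?_⟩
    dsimp only
    rw [det₂_smul_eq_add, hα, hβ, smul_add, mul_smul, mul_smul]

end Det₂

theorem Int.emod_abs_eq_emod_abs_iff_dvd_sub {a b d : ℤ} :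
    a % |d| = b % |d| ↔ d ∣ a - b := by
  rw [Int.emod_abs, Int.emod_abs, dvd_sub_comm]
  exact Int.modEq_iff_dvd

theorem vcm_color_eq_iff_lattice (u₁ u₂ : ℤ × ℤ)
    (d : ℤ) (hd : d = u₁.1 * u₂.2 - u₁.2 * u₂.1) (hd0 : d ≠ 0)
    (c₁ c₂ : ℤ × ℤ → ℤ)
    (hc₁ : ∀ w : ℤ × ℤ, c₁ w = (w.1 * u₂.2 - w.2 * u₂.1) % |d|)
    (hc₂ : ∀ w : ℤ × ℤ, c₂ w = (-(w.1 * u₁.2) + w.2 * u₁.1) % |d|)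
    (w₁ w₂ : ℤ × ℤ) :
    (c₁ w₁ = c₁ w₂ ∧ c₂ w₁ = c₂ w₂) ↔
      ∃ α β : ℤ, w₁ - w₂ = α • u₁ + β • u₂ := by
  have hd' : d = det₂ u₁ u₂ := hd
  have hc₁' (w : ℤ × ℤ) : c₁ w = det₂ w u₂ % |d| := hc₁ w
  have hc₂' (w : ℤ × ℤ) : c₂ w = det₂ u₁ w % |d| := by
    rw [hc₂, det₂]; ring_nf
  rw [hc₁', hc₁', hc₂', hc₂', Int.emod_abs_eq_emod_abs_iff_dvd_sub,
    Int.emod_abs_eq_emod_abs_iff_dvd_sub, ← det₂_sub_left, ← det₂_sub_right, hd',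
    exists_eq_smul_add_smul_iff_dvd_det₂ (hd' ▸ hd0)]
end

section
/- Let u₁, u₂ ∈ ℤ² with d = det(u₁,u₂) ≠ 0, and define c₁, c₂ as in the VCM coloring: c₁(w) = det(w,u₂) mod |d|, c₂(w) = det(u₁,w) mod |d|. Then the set {(c₁(w), c₂(w)) : w ∈ ℤ²} has cardinality exactly |d|. -/
/-! By Cramer's rule `d • w = c₁(w) • u₁ + c₂(w) • u₂`, so two points receive the same color
exactly when their difference lies in the lattice `ℤ u₁ + ℤ u₂`. The colors are therefore in
bijection with the cosets of that lattice, whose index in `ℤ²` is `|d|`. -/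

theorem LinearMap.index_range_eq_natAbs_det {M : Type*} [AddCommGroup M] [Module.Free ℤ M]
    [Module.Finite ℤ M] {f : M →ₗ[ℤ] M} (hf : Function.Injective f) :
    (LinearMap.range f).toAddSubgroup.index = (LinearMap.det f).natAbs := by
  change Nat.card (M ⧸ LinearMap.range f) = _
  rw [← Submodule.natAbs_det_equiv (LinearMap.range f) (LinearEquiv.ofInjective f hf)]
  rfl

theorem AddSubgroup.ncard_range_eq_index {G X : Type*} [AddGroup G] (H : AddSubgroup G)
    (Ψ : G → X) (hΨ : ∀ v w, Ψ v = Ψ w ↔ -v + w ∈ H) : (Set.range Ψ).ncard = H.index := by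
  have hker : Setoid.ker Ψ = QuotientAddGroup.leftRel H := by
    ext v w
    rw [Setoid.ker_def, QuotientAddGroup.leftRel_apply, hΨ]
  rw [AddSubgroup.index, ← Nat.card_coe_set_eq,
    ← Nat.card_congr (Setoid.quotientKerEquivRange Ψ), hker]
  rfl

section
variable {R : Type*} [CommRing R]

def det2 (v w : R × R) : R := v.1 * w.2 - v.2 * w.1

def latticeMap (u₁ u₂ : R × R) : R × R →ₗ[R] R × R :=
  (LinearMap.toSpanSingleton R _ u₁).coprod (LinearMap.toSpanSingleton R _ u₂)

theorem latticeMap_apply (u₁ u₂ p : R × R) : latticeMap u₁ u₂ p = p.1 • u₁ + p.2 • u₂ := rfl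

theorem det_latticeMap (u₁ u₂ : R × R) : LinearMap.det (latticeMap u₁ u₂) = det2 u₁ u₂ := by
  rw [← LinearMap.det_toMatrix (Module.Basis.finTwoProd R), Matrix.det_fin_two]
  simp only [LinearMap.toMatrix_apply, Module.Basis.finTwoProd_zero, Module.Basis.finTwoProd_one,
    Module.Basis.coe_finTwoProd_repr, latticeMap_apply, one_smul, zero_smul, add_zero, zero_add,
    Matrix.cons_val_zero, Matrix.cons_val_one, Matrix.cons_val_fin_one, det2]
  ring

theorem det2_latticeMap_left (u₁ u₂ p : R × R) :
    det2 (latticeMap u₁ u₂ p) u₂ = p.1 * det2 u₁ u₂ := by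
  simp only [det2, latticeMap_apply, Prod.fst_add, Prod.snd_add, Prod.smul_fst, Prod.smul_snd,
    smul_eq_mul]
  ring

theorem det2_latticeMap_right (u₁ u₂ p : R × R) :
    det2 u₁ (latticeMap u₁ u₂ p) = p.2 * det2 u₁ u₂ := by
  simp only [det2, latticeMap_apply, Prod.fst_add, Prod.snd_add, Prod.smul_fst, Prod.smul_snd,
    smul_eq_mul]
  ring

-- Cramer's rule.
theorem det2_smul_eq_latticeMap (u₁ u₂ x : R × R) :
    det2 u₁ u₂ • x = latticeMap u₁ u₂ (det2 x u₂, det2 u₁ x) := by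
  ext <;> simp only [det2, latticeMap_apply, Prod.fst_add, Prod.snd_add, Prod.smul_fst,
    Prod.smul_snd, smul_eq_mul] <;> ring

variable [IsDomain R] {u₁ u₂ : R × R}

theorem latticeMap_injective (hd : det2 u₁ u₂ ≠ 0) : Function.Injective (latticeMap u₁ u₂) := by
  rw [← LinearMap.ker_eq_bot, LinearMap.ker_eq_bot']
  intro p hp
  have h₁ := det2_latticeMap_left u₁ u₂ p
  have h₂ := det2_latticeMap_right u₁ u₂ p
  simp only [hp, det2, Prod.fst_zero, Prod.snd_zero, zero_mul, mul_zero, sub_zero] at h₁ h₂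
  exact Prod.ext (mul_eq_zero.mp h₁.symm |>.resolve_right hd)
    (mul_eq_zero.mp h₂.symm |>.resolve_right hd)

theorem mem_range_latticeMap_iff (hd : det2 u₁ u₂ ≠ 0) (x : R × R) :
    x ∈ LinearMap.range (latticeMap u₁ u₂) ↔ det2 u₁ u₂ ∣ det2 x u₂ ∧ det2 u₁ u₂ ∣ det2 u₁ x := by
  constructor
  · rintro ⟨p, rfl⟩
    exact ⟨⟨p.1, by rw [det2_latticeMap_left, mul_comm]⟩,
      ⟨p.2, by rw [det2_latticeMap_right, mul_comm]⟩⟩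
  · rintro ⟨⟨a, ha⟩, ⟨b, hb⟩⟩
    refine ⟨(a, b), smul_right_injective _ hd ?_⟩
    change det2 u₁ u₂ • _ = det2 u₁ u₂ • x
    rw [det2_smul_eq_latticeMap u₁ u₂ x, ha, hb, ← map_smul, Prod.smul_mk, smul_eq_mul,
      smul_eq_mul]

end

def vcmColoring (u₁ u₂ w : ℤ × ℤ) : ℤ × ℤ :=
  (det2 w u₂ % |det2 u₁ u₂|, det2 u₁ w % |det2 u₁ u₂|)

theorem vcmColoring_eq_iff {u₁ u₂ : ℤ × ℤ} (hd : det2 u₁ u₂ ≠ 0) (v w : ℤ × ℤ) :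
    vcmColoring u₁ u₂ v = vcmColoring u₁ u₂ w ↔ -v + w ∈ LinearMap.range (latticeMap u₁ u₂) := by
  have h₁ : det2 w u₂ - det2 v u₂ = det2 (-v + w) u₂ := by
    simp only [det2, Prod.fst_add, Prod.snd_add, Prod.fst_neg, Prod.snd_neg]; ring
  have h₂ : det2 u₁ w - det2 u₁ v = det2 u₁ (-v + w) := by
    simp only [det2, Prod.fst_add, Prod.snd_add, Prod.fst_neg, Prod.snd_neg]; ring
  rw [mem_range_latticeMap_iff hd, ← h₁, ← h₂, vcmColoring, vcmColoring, Prod.mk.injEq]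
  exact and_congr (Int.modEq_iff_dvd.trans (abs_dvd _ _)) (Int.modEq_iff_dvd.trans (abs_dvd _ _))

theorem vcm_color_set_card (u₁ u₂ : ℤ × ℤ)
    (d : ℤ) (hd : d = u₁.1 * u₂.2 - u₁.2 * u₂.1) (hd0 : d ≠ 0) :
    Set.ncard {p : ℤ × ℤ | ∃ w : ℤ × ℤ,
      p = ((w.1 * u₂.2 - w.2 * u₂.1) % |d|, (u₁.1 * w.2 - u₁.2 * w.1) % |d|)} =
      d.natAbs := by
  subst hd
  change {p | ∃ w, p = vcmColoring u₁ u₂ w}.ncard = (det2 u₁ u₂).natAbs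
  have hcolors : {p | ∃ w, p = vcmColoring u₁ u₂ w} = Set.range (vcmColoring u₁ u₂) :=
    Set.ext fun _ => exists_congr fun _ => eq_comm
  rw [hcolors, AddSubgroup.ncard_range_eq_index (LinearMap.range (latticeMap u₁ u₂)).toAddSubgroup
      _ (vcmColoring_eq_iff hd0),
    LinearMap.index_range_eq_natAbs_det (latticeMap_injective hd0), det_latticeMap]
end

section
/- Let R > √2 and h ≥ 1 an integer. There exist linearly independent vectors u₁, u₂ ∈ ℤ² such that every nonzero vector w = α·u₁ + β·u₂ (α, β ∈ ℤ, not both zero) has Euclidean norm |w| > h·R, and |det(u₁,u₂)| ≤ (√3/2)·h²·R² + 2hR + (hR+2)·√2. -/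
/-- Determinant of two integer vectors. -/
def idet (u v : ℤ × ℤ) : ℤ := u.1 * v.2 - u.2 * v.1

/-!
Take the basis `u₁ = (A, 0)`, `u₂ = (B, C)` of a slightly inflated hexagonal lattice, with
`A = ⌊t⌋ + 1 > t`, `B = A / 2` and `C = ⌈(√3/2) t + 1⌉`, where `t = hR`. Since `0 ≤ 2B ≤ A` the basis
is reduced: a nonzero lattice vector `α u₁ + β u₂` has squared length at least `A²` if `β = 0`,
at least `B² + C²` if `β = ±1`, and at least `4C²` if `|β| ≥ 2`, and each of these exceeds `t²`.
The determinant is `AC ≤ (t + 1)((√3/2) t + 2)`.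
-/

lemma lt_inorm_iff {t : ℝ} (ht : 0 ≤ t) (u : ℤ × ℤ) :
    t < inorm u ↔ t ^ 2 < (u.1 : ℝ) ^ 2 + (u.2 : ℝ) ^ 2 :=
  Real.lt_sqrt ht

lemma le_abs_mul_add {A B : ℤ} (hB : 0 ≤ B) (hBA : 2 * B ≤ A) (α : ℤ) : B ≤ |α * A + B| := by
  rw [le_abs']
  rcases (by omega : α ≤ -1 ∨ α = 0 ∨ 1 ≤ α) with hα | rfl | hα
  · left; nlinarith
  · right; simp
  · right; nlinarith

lemma min_le_sq_add_sq_of_reduced {A B C : ℤ} (hB : 0 ≤ B) (hBA : 2 * B ≤ A) {α β : ℤ}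
    (hαβ : ¬(α = 0 ∧ β = 0)) :
    min (A ^ 2) (min (B ^ 2 + C ^ 2) (4 * C ^ 2)) ≤ (α * A + β * B) ^ 2 + (β * C) ^ 2 := by
  have hB_sq_le {x : ℤ} (hx : B ≤ |x|) : B ^ 2 ≤ x ^ 2 := by
    rw [sq_le_sq, abs_of_nonneg hB]; exact hx
  obtain rfl | rfl | rfl | hβ : β = 0 ∨ β = 1 ∨ β = -1 ∨ 4 ≤ β ^ 2 := by
    rcases (by omega : β = 0 ∨ β = 1 ∨ β = -1 ∨ 2 ≤ β ∨ β ≤ -2) with h | h | h | h | h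
    all_goals first | tauto | (right; right; right; nlinarith)
  · have hα : 0 < α ^ 2 := by
      have : α ≠ 0 := by tauto
      positivity
    refine min_le_of_left_le ?_
    nlinarith [sq_nonneg A]
  · refine min_le_of_right_le (min_le_of_left_le ?_)
    nlinarith [hB_sq_le (le_abs_mul_add hB hBA α)]
  · refine min_le_of_right_le (min_le_of_left_le ?_)
    have := hB_sq_le (le_abs_mul_add hB hBA (-α))
    nlinarith
  · refine min_le_of_right_le (min_le_of_right_le ?_)
    nlinarith [sq_nonneg (α * A + β * B), sq_nonneg C]

lemma exists_basis_forall_lt_inorm {t : ℝ} (ht : 0 ≤ t) :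
    ∃ u₁ u₂ : ℤ × ℤ, 0 < idet u₁ u₂ ∧
      (∀ α β : ℤ, ¬(α = 0 ∧ β = 0) → t < inorm (α • u₁ + β • u₂)) ∧
      (idet u₁ u₂ : ℝ) ≤ (t + 1) * (√3 / 2 * t + 2) := by
  set A : ℤ := ⌊t⌋ + 1 with hA
  set C : ℤ := ⌈√3 / 2 * t + 1⌉
  set B : ℤ := A / 2
  have htA : t < A := by rw [hA]; push_cast; exact Int.lt_floor_add_one t
  have hAt : (A : ℝ) ≤ t + 1 := by rw [hA]; push_cast; linarith [Int.floor_le t]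
  have hCt : √3 / 2 * t + 1 ≤ C := Int.le_ceil _
  have htC : (C : ℝ) ≤ √3 / 2 * t + 2 := by linarith [Int.ceil_lt_add_one (√3 / 2 * t + 1)]
  have hA0 : 0 < A := by exact_mod_cast ht.trans_lt htA
  have hC0 : 0 < C := by exact_mod_cast (by positivity : (0 : ℝ) < √3 / 2 * t + 1).trans_le hCt
  have hB : 0 ≤ B := by omega
  have hBA : 2 * B ≤ A := by omega
  have hAB : (A : ℝ) - 1 ≤ 2 * B := by exact_mod_cast (by omega : A - 1 ≤ 2 * B)
  have hs3 : 1 ≤ √3 := by rw [Real.one_le_sqrt]; norm_num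
  have ht_lt_min :
      t ^ 2 < min ((A : ℝ) ^ 2) (min ((B : ℝ) ^ 2 + (C : ℝ) ^ 2) (4 * (C : ℝ) ^ 2)) := by
    have h2C : t < 2 * C := by nlinarith
    refine lt_min (by nlinarith) (lt_min ?_ (by nlinarith))
    rcases le_total t 1 with ht1 | ht1
    · nlinarith [sq_nonneg (B : ℝ)]
    · have hB2 : ((t - 1) / 2) ^ 2 ≤ (B : ℝ) ^ 2 :=
        pow_le_pow_left₀ (by linarith) (by linarith) 2
      have hC2 : (√3 / 2 * t + 1) ^ 2 ≤ (C : ℝ) ^ 2 := pow_le_pow_left₀ (by positivity) hCt 2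
      nlinarith [Real.sq_sqrt (show (0 : ℝ) ≤ 3 by norm_num)]
  refine ⟨(A, 0), (B, C), by simp [idet]; positivity, fun α β hαβ => ?_, ?_⟩
  · rw [lt_inorm_iff ht]
    have hmin := (Int.cast_le (R := ℝ)).mpr (min_le_sq_add_sq_of_reduced (C := C) hB hBA hαβ)
    push_cast at hmin
    simpa using ht_lt_min.trans_le hmin
  · have hC0' : (0 : ℝ) < C := by exact_mod_cast hC0
    simpa [idet] using mul_le_mul hAt htC hC0'.le (by linarith)

theorem near_hexagonal_upper_bound_general (R : ℝ) (hR : R > Real.sqrt 2)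
    (h : ℕ) :
    ∃ u₁ u₂ : ℤ × ℤ, idet u₁ u₂ ≠ 0 ∧
      (∀ α β : ℤ, ¬(α = 0 ∧ β = 0) → inorm (α • u₁ + β • u₂) > h * R) ∧
      |(idet u₁ u₂ : ℝ)| ≤
        (Real.sqrt 3 / 2) * h^2 * R^2 + 2 * h * R + (h * R + 2) * Real.sqrt 2 := by
  have ht : 0 ≤ (h : ℝ) * R := mul_nonneg h.cast_nonneg ((Real.sqrt_nonneg 2).trans hR.le)
  obtain ⟨u₁, u₂, hdet_pos, hnorm, hdet_le⟩ := exists_basis_forall_lt_inorm ht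
  refine ⟨u₁, u₂, hdet_pos.ne', hnorm, ?_⟩
  have hs3 : √3 ≤ 2 := Real.sqrt_le_iff.mpr ⟨by norm_num, by norm_num⟩
  have hs2 : 1 ≤ √2 := by rw [Real.one_le_sqrt]; norm_num
  rw [abs_of_pos (by exact_mod_cast hdet_pos)]
  calc (idet u₁ u₂ : ℝ) ≤ (h * R + 1) * (√3 / 2 * (h * R) + 2) := hdet_le
    _ ≤ _ := by nlinarith

theorem near_hexagonal_upper_bound (R : ℝ) (hR : R > Real.sqrt 2)
    (h : ℕ) (hh : 1 ≤ h) :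
    ∃ u₁ u₂ : ℤ × ℤ, idet u₁ u₂ ≠ 0 ∧
      (∀ α β : ℤ, ¬(α = 0 ∧ β = 0) → inorm (α • u₁ + β • u₂) > h * R) ∧
      |(idet u₁ u₂ : ℝ)| ≤
        (Real.sqrt 3 / 2) * h^2 * R^2 + 2 * h * R + (h * R + 2) * Real.sqrt 2 :=
  near_hexagonal_upper_bound_general R hR h
end
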